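/- arXiv:2410.18632 — 5 statements merged into one kernel-verified Lean document; each statement's English description precedes it below -/
import Mathlib

section
/- If A ⊆ ℕ is a J-set, then the difference set A - A = {n ∈ ℕ : ∃ a ∈ A, a + n ∈ A} is an IP*-set, i.e., A - A intersects FS(⟨xₙ⟩) for every sequence ⟨xₙ⟩ in ℕ. -/
/-- A set `A ⊆ ℕ` is a J-set. -/
def JSet (A : Set ℕ) : Prop :=
  ∀ F : Finset (ℕ → ℕ), ∃ (a : ℕ) (H : Finset ℕ), H.Nonempty ∧
    ∀ f ∈ F, a + ∑ n ∈ H, f n ∈ A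

/-- The difference set `A - A = {n : ∃ a ∈ A, a + n ∈ A}`. -/
def diffSet (A : Set ℕ) : Set ℕ := {n | ∃ a ∈ A, a + n ∈ A}

/-- If `A` is a J-set then `A - A` is an IP*-set: it meets `FS(⟨xₙ⟩)`
for every sequence `⟨xₙ⟩` in `ℕ`. -/
theorem jset_diff_ipstar (A : Set ℕ) (hA : JSet A) :
    ∀ x : ℕ → ℕ, ∃ H : Finset ℕ, H.Nonempty ∧ (∑ n ∈ H, x n) ∈ diffSet A := by
  classical
  intro x
  -- Putting the zero sequence into the family forces the shift `a` itself into `A`.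
  obtain ⟨a, H, hH, hmem⟩ := hA {0, x}
  refine ⟨H, hH, a, ?_, hmem x (by simp)⟩
  simpa using hmem 0 (by simp)
end

section
/- If A, B ⊆ ℕ are dynamical C*-sets, then A ∩ B is a dynamical C*-set. -/
open MeasureTheory Filter

/-- Weak mixing for a measure-preserving system. -/
def WeakMixing {X : Type*} [MeasurableSpace X] (μ : Measure X) (T : X → X) : Prop :=
  ∀ A B : Set X, MeasurableSet A → MeasurableSet B →
    Tendsto (fun N : ℕ => (1 / N : ℝ) * ∑ n ∈ Finset.Icc 1 N,
      |(μ (A ∩ T^[n] ⁻¹' B)).toReal - (μ A).toReal * (μ B).toReal|)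
      atTop (nhds 0)

/-- `A ⊆ ℕ` is a dynamical C*-set: the positive return-time set of two sets of
positive measure in some weakly mixing probability system is contained in `A`. -/
def DynCStar (A : Set ℕ) : Prop :=
  ∃ (X : Type) (_ : MeasurableSpace X) (μ : Measure X) (T : X → X),
    IsProbabilityMeasure μ ∧ MeasurePreserving T μ μ ∧ WeakMixing μ T ∧
    ∃ A₀ A₁ : Set X, MeasurableSet A₀ ∧ MeasurableSet A₁ ∧ 0 < μ A₀ * μ A₁ ∧
      {n : ℕ | 0 < μ (A₀ ∩ T^[n] ⁻¹' A₁)} ⊆ A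

/-!
The product of the two systems is weakly mixing, and the return times of `A₀ ×ˢ B₀` to
`A₁ ×ˢ B₁` in it are exactly the common return times of the two factors.

On measurable rectangles, the mixing defect of the product is bounded by the sum of the defects
of the factors. For a fixed `F`, the sets `E` whose defect against `F` is Cesàro-null form a
Dynkin system: passing to the complement flips the sign of the defect, and a disjoint union is
approximated uniformly in `n` by its finite partial unions, with error at most the measure of the
tail. The π-λ theorem then extends mixing from rectangles to all measurable sets, first in one
argument and then in the other.
-/

open Set Topology Function

noncomputable def cesaroMean (u : ℕ → ℝ) (N : ℕ) : ℝ :=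
  (1 / N : ℝ) * ∑ n ∈ Finset.Icc 1 N, u n

def CesaroNull (u : ℕ → ℝ) : Prop :=
  Tendsto (cesaroMean fun n => |u n|) atTop (𝓝 0)

section Cesaro

variable {u v : ℕ → ℝ}

lemma cesaroMean_nonneg (h : ∀ n, 0 ≤ u n) (N : ℕ) : 0 ≤ cesaroMean u N :=
  mul_nonneg (by positivity) (Finset.sum_nonneg fun n _ => h n)

lemma cesaroMean_mono (h : ∀ n, u n ≤ v n) (N : ℕ) : cesaroMean u N ≤ cesaroMean v N :=
  mul_le_mul_of_nonneg_left (Finset.sum_le_sum fun n _ => h n) (by positivity)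

lemma cesaroMean_add (u v : ℕ → ℝ) (N : ℕ) :
    cesaroMean (u + v) N = cesaroMean u N + cesaroMean v N := by
  simp only [cesaroMean, Pi.add_apply, Finset.sum_add_distrib, mul_add]

lemma cesaroMean_const_le {c : ℝ} (hc : 0 ≤ c) (N : ℕ) : cesaroMean (fun _ => c) N ≤ c := by
  rcases N.eq_zero_or_pos with rfl | hN
  · simpa [cesaroMean] using hc
  · simp [cesaroMean, hN.ne']

lemma cesaroNull_zero : CesaroNull fun _ => 0 := by
  have h : (cesaroMean fun _ => |(0 : ℝ)|) = 0 := by ext N; simp [cesaroMean]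
  rw [CesaroNull, h]
  exact tendsto_const_nhds

lemma CesaroNull.mono (hv : CesaroNull v) (h : ∀ n, |u n| ≤ |v n|) : CesaroNull u :=
  squeeze_zero (cesaroMean_nonneg fun n => abs_nonneg (u n)) (cesaroMean_mono h) hv

lemma CesaroNull.abs (hu : CesaroNull u) : CesaroNull |u| :=
  hu.mono fun n => (abs_abs (u n)).le

lemma CesaroNull.add (hu : CesaroNull u) (hv : CesaroNull v) : CesaroNull (u + v) := by
  refine squeeze_zero (cesaroMean_nonneg fun n => abs_nonneg _)
    (fun N => (cesaroMean_mono (u := fun n => |(u + v) n|)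
      (fun n => abs_add_le (u n) (v n)) N).trans_eq (cesaroMean_add _ _ N)) ?_
  simpa using Tendsto.add hu hv

lemma cesaroNull_sum {ι : Type*} (s : Finset ι) {v : ι → ℕ → ℝ}
    (h : ∀ i ∈ s, CesaroNull (v i)) : CesaroNull (∑ i ∈ s, v i) :=
  Finset.sum_induction _ CesaroNull (fun _ _ => CesaroNull.add) cesaroNull_zero h

lemma CesaroNull.of_abs_sub_le {v : ℕ → ℕ → ℝ} {d : ℕ → ℝ} (hv : ∀ k, CesaroNull (v k))
    (hd : Tendsto d atTop (𝓝 0)) (h : ∀ k n, |u n - v k n| ≤ d k) : CesaroNull u := by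
  rw [CesaroNull, Metric.tendsto_atTop]
  intro ε hε
  obtain ⟨k, hk⟩ := (hd.eventually (gt_mem_nhds (half_pos hε))).exists
  have hd0 : 0 ≤ d k := (abs_nonneg _).trans (h k 0)
  obtain ⟨N₀, hN₀⟩ := Metric.tendsto_atTop.1 (hv k) (ε / 2) (half_pos hε)
  refine ⟨N₀, fun N hN => ?_⟩
  have hvk := hN₀ N hN
  rw [Real.dist_0_eq_abs, abs_of_nonneg (cesaroMean_nonneg (fun n => abs_nonneg _) N)] at hvk ⊢
  calc cesaroMean (fun n => |u n|) N
      ≤ cesaroMean ((fun n => |v k n|) + fun _ => d k) N :=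
        cesaroMean_mono (fun n => by
          have := abs_sub_abs_le_abs_sub (u n) (v k n)
          simp only [Pi.add_apply]; linarith [h k n]) N
    _ ≤ cesaroMean (fun n => |v k n|) N + d k := by
        rw [cesaroMean_add]; gcongr; exact cesaroMean_const_le hd0 N
    _ < ε := by linarith

end Cesaro

section Dynkin

variable {Z : Type*} [MeasurableSpace Z]

lemma measureReal_iUnion_eq_sum_range_add (μ : Measure Z) [IsFiniteMeasure μ] {f : ℕ → Set Z}
    (hd : Pairwise (Disjoint on f)) (hm : ∀ i, MeasurableSet (f i)) (k : ℕ) :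
    μ.real (⋃ i, f i) = ∑ i ∈ Finset.range k, μ.real (f i) + μ.real (⋃ i ≥ k, f i) := by
  have hsplit : ⋃ i, f i = (⋃ i ∈ Finset.range k, f i) ∪ ⋃ i ≥ k, f i := by
    ext x
    simp only [mem_iUnion, mem_union, Finset.mem_range, exists_prop]
    constructor
    · rintro ⟨i, hi⟩
      rcases lt_or_ge i k with hik | hik
      exacts [.inl ⟨i, hik, hi⟩, .inr ⟨i, hik, hi⟩]
    · rintro (⟨i, -, hi⟩ | ⟨i, -, hi⟩) <;> exact ⟨i, hi⟩
  have hdisj : Disjoint (⋃ i ∈ Finset.range k, f i) (⋃ i ≥ k, f i) := by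
    simp only [disjoint_iUnion_left, disjoint_iUnion_right, Finset.mem_range]
    exact fun i hi j hj => hd (by omega)
  rw [hsplit, measureReal_union hdisj (MeasurableSet.biUnion (to_countable _) fun i _ => hm i)
      (measure_ne_top μ _) (measure_ne_top μ _),
    measureReal_biUnion_finset (fun i _ j _ hij => hd hij) fun i _ => hm i]

lemma abs_measureReal_sub_le {ρ σ m : Measure Z} [IsFiniteMeasure m] (hρ : ρ ≤ m) (hσ : σ ≤ m)
    (s : Set Z) : |ρ.real s - σ.real s| ≤ m.real s := by
  have hρs : ρ.real s ≤ m.real s := ENNReal.toReal_mono (measure_ne_top m s) (hρ s)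
  have hσs : σ.real s ≤ m.real s := ENNReal.toReal_mono (measure_ne_top m s) (hσ s)
  exact abs_sub_le_iff.2 ⟨by linarith [measureReal_nonneg (μ := σ) (s := s)],
    by linarith [measureReal_nonneg (μ := ρ) (s := s)]⟩

variable (m : Measure Z) [IsFiniteMeasure m] {ρ σ : ℕ → Measure Z}
  (hρ : ∀ n, ρ n ≤ m) (hσ : ∀ n, σ n ≤ m)

include hρ hσ in
lemma cesaroNull_measureReal_sub_iUnion {f : ℕ → Set Z} (hd : Pairwise (Disjoint on f))
    (hm : ∀ i, MeasurableSet (f i))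
    (h : ∀ i, CesaroNull fun n => (ρ n).real (f i) - (σ n).real (f i)) :
    CesaroNull fun n => (ρ n).real (⋃ i, f i) - (σ n).real (⋃ i, f i) := by
  have := fun n => isFiniteMeasure_of_le m (hρ n)
  have := fun n => isFiniteMeasure_of_le m (hσ n)
  have htail : Tendsto (fun k => m.real (⋃ i ≥ k, f i)) atTop (𝓝 0) :=
    (ENNReal.tendsto_toReal ENNReal.zero_ne_top).comp
      (tendsto_measure_biUnion_Ici_zero_of_pairwise_disjoint
        (fun i => (hm i).nullMeasurableSet) hd)
  refine .of_abs_sub_le (fun k => cesaroNull_sum (Finset.range k) fun i _ => h i) htail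
    fun k n => ?_
  rw [measureReal_iUnion_eq_sum_range_add _ hd hm k,
    measureReal_iUnion_eq_sum_range_add _ hd hm k, Finset.sum_apply, Finset.sum_sub_distrib]
  convert abs_measureReal_sub_le (hρ n) (hσ n) (⋃ i ≥ k, f i) using 2
  ring

include hρ hσ in
theorem cesaroNull_measureReal_sub_of_isPiSystem (huniv : ∀ n, ρ n univ = σ n univ)
    {C : Set (Set Z)} (hgen : ‹MeasurableSpace Z› = MeasurableSpace.generateFrom C)
    (hC : IsPiSystem C) (hbasic : ∀ s ∈ C, CesaroNull fun n => (ρ n).real s - (σ n).real s)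
    {s : Set Z} (hs : MeasurableSet s) :
    CesaroNull fun n => (ρ n).real s - (σ n).real s := by
  have := fun n => isFiniteMeasure_of_le m (hρ n)
  have := fun n => isFiniteMeasure_of_le m (hσ n)
  induction s, hs using MeasurableSpace.induction_on_inter hgen hC with
  | empty => simpa using cesaroNull_zero
  | basic s hs => exact hbasic s hs
  | compl s hs ih =>
    refine ih.mono fun n => ?_
    have huniv_real : (ρ n).real univ = (σ n).real univ := congrArg ENNReal.toReal (huniv n)
    rw [measureReal_compl hs, measureReal_compl hs, huniv_real, sub_sub_sub_cancel_left,
      abs_sub_comm]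
  | iUnion f hd hm ih => exact cesaroNull_measureReal_sub_iUnion m hρ hσ hd hm ih

end Dynkin

section Mixing

variable {Z : Type*} [MeasurableSpace Z]

noncomputable def mixingDefect (μ : Measure Z) (T : Z → Z) (E F : Set Z) (n : ℕ) : ℝ :=
  μ.real (E ∩ T^[n] ⁻¹' F) - μ.real E * μ.real F

lemma weakMixing_iff {μ : Measure Z} {T : Z → Z} :
    WeakMixing μ T ↔ ∀ E F, MeasurableSet E → MeasurableSet F →
      CesaroNull (mixingDefect μ T E F) :=
  Iff.rfl

lemma MeasureTheory.Measure.smul_le_self_of_le_one {c : ENNReal} (hc : c ≤ 1) (ν : Measure Z) :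
    c • ν ≤ ν :=
  fun s => by simpa using mul_le_of_le_one_left zero_le hc

variable {μ : Measure Z} [IsProbabilityMeasure μ] {T : Z → Z} (hT : MeasurePreserving T μ μ)
  {C : Set (Set Z)} (hgen : ‹MeasurableSpace Z› = MeasurableSpace.generateFrom C)
  (hC : IsPiSystem C)

include hT hgen hC in
lemma cesaroNull_mixingDefect_left {F : Set Z} (hF : MeasurableSet F)
    (h : ∀ E ∈ C, CesaroNull (mixingDefect μ T E F)) {E : Set Z} (hE : MeasurableSet E) :
    CesaroNull (mixingDefect μ T E F) := by
  have hdefect : ∀ E, MeasurableSet E → (fun n => (μ.restrict (T^[n] ⁻¹' F)).real E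
      - (μ F • μ).real E) = mixingDefect μ T E F := fun E hE => by
    ext n
    rw [measureReal_restrict_apply hE, measureReal_ennreal_smul_apply, mixingDefect, mul_comm]
    rfl
  rw [← hdefect E hE]
  refine cesaroNull_measureReal_sub_of_isPiSystem μ (fun n => Measure.restrict_le_self)
    (fun n => Measure.smul_le_self_of_le_one prob_le_one μ) (fun n => ?_) hgen hC
    (fun E hE' => ?_) hE
  · simp [(hT.iterate n).measure_preimage hF.nullMeasurableSet]
  · rw [hdefect E (hgen ▸ .basic E hE')]
    exact h E hE'

include hT hgen hC in
lemma cesaroNull_mixingDefect_right {E : Set Z} (hE : MeasurableSet E)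
    (h : ∀ F ∈ C, CesaroNull (mixingDefect μ T E F)) {F : Set Z} (hF : MeasurableSet F) :
    CesaroNull (mixingDefect μ T E F) := by
  have hdefect : ∀ F, MeasurableSet F → (fun n => ((μ.restrict E).map T^[n]).real F
      - (μ E • μ).real F) = mixingDefect μ T E F := fun F hF => by
    ext n
    rw [map_measureReal_apply (hT.measurable.iterate n) hF, measureReal_restrict_apply' hE,
      measureReal_ennreal_smul_apply, mixingDefect, inter_comm]
    rfl
  rw [← hdefect F hF]
  refine cesaroNull_measureReal_sub_of_isPiSystem μ (fun n => ?_)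
    (fun n => Measure.smul_le_self_of_le_one prob_le_one μ) (fun n => ?_) hgen hC
    (fun F hF' => ?_) hF
  · calc (μ.restrict E).map T^[n] ≤ μ.map T^[n] :=
          Measure.map_mono Measure.restrict_le_self (hT.measurable.iterate n)
      _ = μ := (hT.iterate n).map_eq
  · simp [Measure.map_apply (hT.measurable.iterate n) MeasurableSet.univ]
  · rw [hdefect F (hgen ▸ .basic F hF')]
    exact h F hF'

include hT hgen hC in
theorem weakMixing_of_isPiSystem (h : ∀ E ∈ C, ∀ F ∈ C, CesaroNull (mixingDefect μ T E F)) :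
    WeakMixing μ T := fun _ _ hE hF =>
  cesaroNull_mixingDefect_right hT hgen hC hE (fun F' hF' =>
    cesaroNull_mixingDefect_left hT hgen hC (hgen ▸ .basic F' hF') (h · · F' hF') hE) hF

end Mixing

section Product

variable {X Y : Type*} [MeasurableSpace X] [MeasurableSpace Y] {μ : Measure X} {ν : Measure Y}
  {T : X → X} {S : Y → Y}

lemma MeasureTheory.Measure.prod_inter_preimage_iterate_prodMap [SFinite ν] (n : ℕ)
    (A C : Set X) (B D : Set Y) :
    μ.prod ν (A ×ˢ B ∩ (Prod.map T S)^[n] ⁻¹' (C ×ˢ D))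
      = μ (A ∩ T^[n] ⁻¹' C) * ν (B ∩ S^[n] ⁻¹' D) := by
  rw [Prod.map_iterate, preimage_prod_map_prod, prod_inter_prod, Measure.prod_prod]

lemma abs_mul_sub_mul_le {x y p q : ℝ} (hy₀ : 0 ≤ y) (hy₁ : y ≤ 1) (hp₀ : 0 ≤ p) (hp₁ : p ≤ 1) :
    |x * y - p * q| ≤ |x - p| + |y - q| :=
  calc |x * y - p * q| = |(x - p) * y + p * (y - q)| := by congr 1; ring
    _ ≤ |(x - p) * y| + |p * (y - q)| := abs_add_le _ _
    _ = |x - p| * y + p * |y - q| := by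
      rw [abs_mul, abs_mul, abs_of_nonneg hy₀, abs_of_nonneg hp₀]
    _ ≤ |x - p| + |y - q| := add_le_add (mul_le_of_le_one_right (abs_nonneg _) hy₁)
      (mul_le_of_le_one_left (abs_nonneg _) hp₁)

variable [IsProbabilityMeasure μ] [IsProbabilityMeasure ν]

lemma mixingDefect_prod_le (n : ℕ) (A C : Set X) (B D : Set Y) :
    |mixingDefect (μ.prod ν) (Prod.map T S) (A ×ˢ B) (C ×ˢ D) n|
      ≤ |mixingDefect μ T A C n| + |mixingDefect ν S B D n| := by
  simp only [mixingDefect, measureReal_def, Measure.prod_inter_preimage_iterate_prodMap,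
    Measure.prod_prod, ENNReal.toReal_mul]
  rw [mul_mul_mul_comm]
  exact abs_mul_sub_mul_le measureReal_nonneg measureReal_le_one
    (mul_nonneg measureReal_nonneg measureReal_nonneg)
    (mul_le_one₀ measureReal_le_one measureReal_nonneg measureReal_le_one)

theorem WeakMixing.prod (hT : MeasurePreserving T μ μ) (hS : MeasurePreserving S ν ν)
    (hwT : WeakMixing μ T) (hwS : WeakMixing ν S) :
    WeakMixing (μ.prod ν) (Prod.map T S) := by
  refine weakMixing_of_isPiSystem (hT.prod hS) generateFrom_prod.symm isPiSystem_prod ?_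
  rintro _ ⟨A, hA, B, hB, rfl⟩ _ ⟨C, hC, D, hD, rfl⟩
  have hmix := (weakMixing_iff.1 hwT A C hA hC).abs.add (weakMixing_iff.1 hwS B D hB hD).abs
  exact hmix.mono fun n => (mixingDefect_prod_le n A C B D).trans (le_abs_self _)

end Product

/-- The intersection of two dynamical C*-sets is a dynamical C*-set. -/
theorem dynCStar_inter (A B : Set ℕ) (hA : DynCStar A) (hB : DynCStar B) :
    DynCStar (A ∩ B) := by
  obtain ⟨X, _, μ, T, _, hT, hwT, A₀, A₁, hA₀, hA₁, hApos, hAsub⟩ := hA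
  obtain ⟨Y, _, ν, S, _, hS, hwS, B₀, B₁, hB₀, hB₁, hBpos, hBsub⟩ := hB
  refine ⟨X × Y, inferInstance, μ.prod ν, Prod.map T S, inferInstance, hT.prod hS,
    hwT.prod hT hS hwS, A₀ ×ˢ B₀, A₁ ×ˢ B₁, hA₀.prod hB₀, hA₁.prod hB₁, ?_, ?_⟩
  · rw [Measure.prod_prod, Measure.prod_prod, mul_mul_mul_comm]
    exact CanonicallyOrderedAdd.mul_pos.2 ⟨hApos, hBpos⟩
  · intro n (hn : 0 < μ.prod ν _)
    rw [Measure.prod_inter_preimage_iterate_prodMap, CanonicallyOrderedAdd.mul_pos] at hn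
    exact ⟨hAsub hn.1, hBsub hn.2⟩
end

section
/- If A ⊆ ℕ is a dynamical C*-set and n ∈ ℕ with n ≥ 1, then n⁻¹A = {m ∈ ℕ : nm ∈ A} is a dynamical C*-set. -/
/-!
`Tⁿ` witnesses that `n⁻¹A` is a dynamical C*-set: its return times from `A₀` to `A₁` are exactly
the `m` with `nm` a return time for `T`, and it stays weakly mixing since the Cesàro mean of a
nonnegative sequence along the multiples of `n` is at most `n` times its Cesàro mean up to `nN`.
-/

open MeasureTheory Filter

lemma sum_Icc_comp_mul_le {a : ℕ → ℝ} (ha : ∀ k, 0 ≤ a k) {n : ℕ} (hn : 0 < n) (N : ℕ) :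
    ∑ k ∈ Finset.Icc 1 N, a (n * k) ≤ ∑ k ∈ Finset.Icc 1 (n * N), a k := by
  rw [← Finset.sum_image fun x _ y _ h => Nat.eq_of_mul_eq_mul_left hn h]
  refine Finset.sum_le_sum_of_subset_of_nonneg ?_ fun k _ _ => ha k
  intro j hj
  obtain ⟨k, hk, rfl⟩ := Finset.mem_image.1 hj
  rw [Finset.mem_Icc] at hk ⊢
  exact ⟨Nat.one_le_iff_ne_zero.2 (Nat.mul_ne_zero hn.ne' (by omega)), Nat.mul_le_mul_left n hk.2⟩

lemma tendsto_cesaro_comp_mul {a : ℕ → ℝ} (ha : ∀ k, 0 ≤ a k) {n : ℕ} (hn : 0 < n)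
    (h : Tendsto (fun N : ℕ => (1 / N : ℝ) * ∑ k ∈ Finset.Icc 1 N, a k) atTop (nhds 0)) :
    Tendsto (fun N : ℕ => (1 / N : ℝ) * ∑ k ∈ Finset.Icc 1 N, a (n * k)) atTop (nhds 0) := by
  have hmul : Tendsto (n * ·) atTop atTop := tendsto_id.const_mul_atTop' hn
  have hbound : Tendsto (fun N : ℕ =>
      (n : ℝ) * ((1 / (n * N : ℕ) : ℝ) * ∑ k ∈ Finset.Icc 1 (n * N), a k)) atTop (nhds 0) := by
    simpa using (h.comp hmul).const_mul (n : ℝ)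
  refine squeeze_zero (fun N => mul_nonneg (by positivity) (Finset.sum_nonneg fun k _ => ha _))
    (fun N => ?_) hbound
  rcases Nat.eq_zero_or_pos N with rfl | hN
  · simp
  have hcoeff : (n : ℝ) * (1 / (n * N : ℕ) : ℝ) = 1 / N := by
    push_cast
    field_simp
  rw [← mul_assoc, hcoeff]
  exact mul_le_mul_of_nonneg_left (sum_Icc_comp_mul_le ha hn N) (by positivity)

theorem WeakMixing.iterate {X : Type*} [MeasurableSpace X] {μ : Measure X} {T : X → X}
    (hT : WeakMixing μ T) {n : ℕ} (hn : 0 < n) : WeakMixing μ T^[n] := fun A B hA hB => by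
  simpa only [← Function.iterate_mul] using
    tendsto_cesaro_comp_mul (fun _ => abs_nonneg _) hn (hT A B hA hB)

/-- If `A` is a dynamical C*-set and `n ≥ 1`, then `n⁻¹A = {m : n*m ∈ A}` is a
dynamical C*-set. -/
theorem dynCStar_div (A : Set ℕ) (hA : DynCStar A) (n : ℕ) (hn : 1 ≤ n) :
    DynCStar {m : ℕ | n * m ∈ A} := by
  obtain ⟨X, _, μ, T, hμ, hT, hwm, A₀, A₁, h₀, h₁, hpos, hsub⟩ := hA
  refine ⟨X, _, μ, T^[n], hμ, hT.iterate n, hwm.iterate hn, A₀, A₁, h₀, h₁, hpos, ?_⟩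
  intro m hm
  exact hsub (show 0 < μ (A₀ ∩ T^[n * m] ⁻¹' A₁) by rwa [Function.iterate_mul])
end

section
/- Let B ⊆ ℕ be a dynamical C*-set. Then there exists a dynamical C*-set C ⊆ B such that for every m ∈ C, the shift −m + C = {n ∈ ℕ : m + n ∈ C} is a dynamical C*-set. -/
/-! `C` is the full return-time set of `A₀` to `A₁`. For `m ∈ C` put `D = A₀ ∩ T⁻ᵐA₁`, a set of
positive measure; since `D ∩ T⁻ⁿD ⊆ A₀ ∩ T⁻⁽ᵐ⁺ⁿ⁾A₁`, the self-return times of `D` lie in `−m + C`,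
so the same weakly mixing system witnesses that `−m + C` is a dynamical C*-set. -/

open MeasureTheory Filter

def returnTimes {X : Type*} [MeasurableSpace X] (μ : Measure X) (T : X → X) (A₀ A₁ : Set X) :
    Set ℕ :=
  {n | 0 < μ (A₀ ∩ T^[n] ⁻¹' A₁)}

theorem inter_iterate_preimage_subset {X : Type*} (T : X → X) (A₀ A₁ : Set X) (m n : ℕ) :
    (A₀ ∩ T^[m] ⁻¹' A₁) ∩ T^[n] ⁻¹' (A₀ ∩ T^[m] ⁻¹' A₁) ⊆ A₀ ∩ T^[m + n] ⁻¹' A₁ := by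
  rintro x ⟨⟨hx₀, -⟩, -, hx₁⟩
  refine ⟨hx₀, ?_⟩
  simpa only [Set.mem_preimage, Function.iterate_add_apply] using hx₁

theorem returnTimes_inter_subset_shift {X : Type*} [MeasurableSpace X] (μ : Measure X)
    (T : X → X) (A₀ A₁ : Set X) (m : ℕ) :
    returnTimes μ T (A₀ ∩ T^[m] ⁻¹' A₁) (A₀ ∩ T^[m] ⁻¹' A₁) ⊆
      {n | m + n ∈ returnTimes μ T A₀ A₁} := fun _ hn =>
  hn.trans_le (measure_mono (inter_iterate_preimage_subset T A₀ A₁ m _))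

theorem dynCStar_of_returnTimes_subset {X : Type} [MeasurableSpace X] {μ : Measure X}
    [IsProbabilityMeasure μ] {T : X → X} (hT : MeasurePreserving T μ μ) (hwm : WeakMixing μ T)
    {A₀ A₁ : Set X} (hA₀ : MeasurableSet A₀) (hA₁ : MeasurableSet A₁) (hpos : 0 < μ A₀ * μ A₁)
    {A : Set ℕ} (hA : returnTimes μ T A₀ A₁ ⊆ A) : DynCStar A :=
  ⟨X, _, μ, T, inferInstance, hT, hwm, A₀, A₁, hA₀, hA₁, hpos, hA⟩

/-- Every dynamical C*-set `B` contains a dynamical C*-set `C` all of whose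
shifts `−m + C` (for `m ∈ C`) are dynamical C*-sets. -/
theorem dynCStar_shift (B : Set ℕ) (hB : DynCStar B) :
    ∃ C : Set ℕ, C ⊆ B ∧ DynCStar C ∧
      ∀ m ∈ C, DynCStar {n : ℕ | m + n ∈ C} := by
  obtain ⟨X, _, μ, T, _, hT, hwm, A₀, A₁, hA₀, hA₁, hpos, hB⟩ := hB
  refine ⟨returnTimes μ T A₀ A₁, hB,
    dynCStar_of_returnTimes_subset hT hwm hA₀ hA₁ hpos subset_rfl, fun m hm => ?_⟩
  have hD : MeasurableSet (A₀ ∩ T^[m] ⁻¹' A₁) :=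
    hA₀.inter ((hT.iterate m).measurable hA₁)
  exact dynCStar_of_returnTimes_subset hT hwm hD hD (ENNReal.mul_pos hm.ne' hm.ne')
    (returnTimes_inter_subset_shift μ T A₀ A₁ m)
end

section
/- Let H be a Hilbert space, U : H → H a unitary operator, p an idempotent ultrafilter on ℕ (p + p = p), and f ∈ H. If g = p-lim_n Uⁿf exists in the weak topology, then p-lim_n Uⁿg = g in the weak topology. -/
open scoped InnerProductSpace

/-- Ultrafilter addition on `ℕ`: `A ∈ p + q ↔ {m : {n : m + n ∈ A} ∈ q} ∈ p`. -/
def uAdd (p q : Ultrafilter ℕ) : Ultrafilter ℕ :=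
  p.bind fun m => q.map (m + ·)

/-- Weak `p`-limit in a Hilbert space: convergence of all inner products along
the ultrafilter. -/
def WLim {H : Type*} [NormedAddCommGroup H] [InnerProductSpace ℝ H]
    (p : Ultrafilter ℕ) (x : ℕ → H) (y : H) : Prop :=
  ∀ g : H, ∀ ε : ℝ, 0 < ε → {n : ℕ | |⟪x n, g⟫_ℝ - ⟪y, g⟫_ℝ| < ε} ∈ p

lemma mem_uAdd {p q : Ultrafilter ℕ} {s : Set ℕ} :
    s ∈ uAdd p q ↔ {m | {n | m + n ∈ s} ∈ q} ∈ p := by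
  change s ∈ (Filter.bind ↑p fun m => Filter.map (m + ·) ↑q) ↔ _
  rw [Filter.mem_bind']
  rfl

lemma inner_symm_eq {H : Type*} [NormedAddCommGroup H] [InnerProductSpace ℝ H]
    (U : H ≃ₗᵢ[ℝ] H) (x y : H) : ⟪U x, y⟫_ℝ = ⟪x, U.symm y⟫_ℝ := by
  calc ⟪U x, y⟫_ℝ = ⟪U x, U (U.symm y)⟫_ℝ := by simp
    _ = ⟪x, U.symm y⟫_ℝ := U.inner_map_map _ _

lemma inner_iterate_eq {H : Type*} [NormedAddCommGroup H] [InnerProductSpace ℝ H]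
    (U : H ≃ₗᵢ[ℝ] H) (n : ℕ) (x y : H) :
    ⟪(⇑U)^[n] x, y⟫_ℝ = ⟪x, (⇑U.symm)^[n] y⟫_ℝ := by
  induction n generalizing y with
  | zero => simp
  | succ n ih =>
    rw [Function.iterate_succ_apply' (⇑U), Function.iterate_succ_apply (⇑U.symm),
      inner_symm_eq, ih]

/-- For a unitary `U`, an idempotent ultrafilter `p`, and `g = p-lim_n Uⁿf`
weakly, one has `p-lim_n Uⁿg = g` weakly. -/
theorem wlim_idempotent_fixed {H : Type*} [NormedAddCommGroup H]
    [InnerProductSpace ℝ H] [CompleteSpace H]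
    (U : H ≃ₗᵢ[ℝ] H) (p : Ultrafilter ℕ) (hp : uAdd p p = p) (f g : H)
    (hg : WLim p (fun n => (⇑U)^[n] f) g) :
    WLim p (fun n => (⇑U)^[n] g) g := by
  intro k ε hε
  have hε2 : 0 < ε / 2 := by positivity
  have h1 := hg k (ε / 2) hε2
  rw [← hp, mem_uAdd] at h1
  have hA : {n : ℕ | {m : ℕ | |⟪(⇑U)^[n + m] f, k⟫_ℝ - ⟪g, k⟫_ℝ| < ε / 2} ∈ p} ∈ p := h1
  refine p.toFilter.mem_of_superset hA ?_
  intro n hn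
  have h2 := hg ((⇑U.symm)^[n] k) (ε / 2) hε2
  have h3 : ({m : ℕ | |⟪(⇑U)^[n + m] f, k⟫_ℝ - ⟪g, k⟫_ℝ| < ε / 2} ∩
      {m : ℕ | |⟪(⇑U)^[m] f, (⇑U.symm)^[n] k⟫_ℝ - ⟪g, (⇑U.symm)^[n] k⟫_ℝ| < ε / 2}) ∈ p :=
    Filter.inter_mem hn h2
  obtain ⟨m, hm1, hm2⟩ := Filter.nonempty_of_mem h3
  simp only [Set.mem_setOf_eq] at hm1 hm2 ⊢
  have e1 : ⟪(⇑U)^[n + m] f, k⟫_ℝ = ⟪(⇑U)^[m] f, (⇑U.symm)^[n] k⟫_ℝ := by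
    rw [Function.iterate_add_apply, inner_iterate_eq]
  have e2 : ⟪g, (⇑U.symm)^[n] k⟫_ℝ = ⟪(⇑U)^[n] g, k⟫_ℝ := (inner_iterate_eq U n g k).symm
  rw [← e1, e2] at hm2
  calc |⟪(⇑U)^[n] g, k⟫_ℝ - ⟪g, k⟫_ℝ|
      ≤ |⟪(⇑U)^[n] g, k⟫_ℝ - ⟪(⇑U)^[n + m] f, k⟫_ℝ| + |⟪(⇑U)^[n + m] f, k⟫_ℝ - ⟪g, k⟫_ℝ| :=
        abs_sub_le _ _ _
    _ < ε / 2 + ε / 2 := by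
        refine add_lt_add ?_ hm1
        rwa [abs_sub_comm]
    _ = ε := by ring
end
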